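/- For pattern (SEQ(A+,B))+ under skip-till-any-match, the type-grained recurrences A.count ← A.count + (A.count + B.count + 1) upon each a-event and B.count ← B.count + A.count upon each b-event correctly compute the total number of matched trends; in particular on the stream a,b,a,a,b,a,b the final count is 43. -/

import Mathlib

attribute [local instance] Classical.propDecidable

inductive Lab where
  | A | B
deriving DecidableEq

/-- A block matched by `SEQ(A+, B)`: one or more `A`s followed by one `B`. -/
inductive Blk : List Lab → Prop where
  | mk (k : ℕ) (hk : 1 ≤ k) : Blk (List.replicate k Lab.A ++ [Lab.B])

/-- A trend matched by `(SEQ(A+, B))+`: a concatenation of one or more blocks. -/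
inductive Pat : List Lab → Prop where
  | one {s : List Lab} : Blk s → Pat s
  | cons {s t : List Lab} : Blk s → Pat t → Pat (s ++ t)

/-- The type-grained updates: upon an `a`-event, `A.count += A.count + B.count + 1`;
upon a `b`-event, `B.count += A.count`. The state is `(A.count, B.count)`. -/
def step (s : ℕ × ℕ) (x : Lab) : ℕ × ℕ :=
  match x with
  | Lab.A => (s.1 + (s.1 + s.2 + 1), s.2)
  | Lab.B => (s.1, s.2 + s.1)

/-!
Call a word *open* if it is zero or more blocks followed by a nonempty run of `A`s: a trend
still waiting for its closing `B`. After reading a prefix of the stream, `A.count` is the number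
of open subsequences and `B.count` the number of trends. Indeed, let `t` range over the
subsequences of the old prefix: `t ++ [b]` is a trend exactly when `t` is open, and `t ++ [a]`
is open exactly when `t` is empty, open or a trend (three disjoint cases), while `t ++ [a]` is
never a trend and `t ++ [b]` never open. This gives `A += A + B + 1` and `B += A`.
-/

namespace List

variable {α : Type*}

theorem countP_or_of_disjoint {l : List α} {p q : α → Bool}
    (h : ∀ a ∈ l, ¬(p a ∧ q a)) :
    l.countP (fun a => p a || q a) = l.countP p + l.countP q := by
  induction l with
  | nil => rfl
  | cons a l ih =>
    simp only [forall_mem_cons] at h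
    simp only [countP_cons, ih h.2]
    cases hp : p a <;> cases hq : q a <;> simp_all <;> omega

theorem countP_sublists_concat (l : List α) (a : α) (p : List α → Bool) :
    (l ++ [a]).sublists.countP p =
      l.sublists.countP p + l.sublists.countP (fun t => p (t ++ [a])) := by
  simp [Function.comp_def]

theorem countP_eq_nil_sublists (l : List α) :
    l.sublists.countP (fun t => decide (t = [])) = 1 := by
  induction l using reverseRecOn with
  | nil => rfl
  | append_singleton l a ih => simp [ih]

end List

open List

inductive OpenTrend : List Lab → Prop where
  | run (k : ℕ) (hk : 1 ≤ k) : OpenTrend (replicate k Lab.A)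
  | cons {s t : List Lab} : Blk s → OpenTrend t → OpenTrend (s ++ t)

theorem Blk.getLast? {s : List Lab} (h : Blk s) : s.getLast? = some Lab.B := by
  cases h; simp

theorem Pat.getLast? {u : List Lab} (h : Pat u) : u.getLast? = some Lab.B := by
  induction h with
  | one hb => exact hb.getLast?
  | cons _ _ ih => simp [getLast?_append, ih]

theorem OpenTrend.getLast? {u : List Lab} (h : OpenTrend u) : u.getLast? = some Lab.A := by
  induction h with
  | run k hk => simp [getLast?_replicate, Nat.one_le_iff_ne_zero.mp hk]
  | cons _ _ ih => simp [getLast?_append, ih]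

theorem Pat.ne_nil {u : List Lab} (h : Pat u) : u ≠ [] := by
  rintro rfl; simpa using h.getLast?

theorem OpenTrend.ne_nil {u : List Lab} (h : OpenTrend u) : u ≠ [] := by
  rintro rfl; simpa using h.getLast?

@[simp] theorem not_pat_nil : ¬Pat [] := fun h => h.ne_nil rfl

@[simp] theorem not_openTrend_nil : ¬OpenTrend [] := fun h => h.ne_nil rfl

theorem Pat.openTrend_dropLast {u : List Lab} (h : Pat u) : OpenTrend u.dropLast := by
  induction h with
  | one hb =>
    obtain ⟨k, hk⟩ := hb
    rw [dropLast_concat]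
    exact .run k hk
  | cons hb hp ih =>
    rw [dropLast_append_of_ne_nil hp.ne_nil]
    exact .cons hb ih

theorem OpenTrend.dropLast_eq_nil_or {u : List Lab} (h : OpenTrend u) :
    u.dropLast = [] ∨ OpenTrend u.dropLast ∨ Pat u.dropLast := by
  induction h with
  | run k hk =>
    rw [dropLast_replicate]
    rcases Nat.lt_or_ge 1 k with hk' | hk'
    · exact .inr (.inl (.run (k - 1) (by omega)))
    · exact .inl (by simp [show k - 1 = 0 by omega])
  | cons hb ht ih =>
    rw [dropLast_append_of_ne_nil ht.ne_nil]
    rcases ih with h | h | h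
    · exact .inr (.inr (by simpa [h] using Pat.one hb))
    · exact .inr (.inl (.cons hb h))
    · exact .inr (.inr (.cons hb h))

theorem OpenTrend.pat_append_B {t : List Lab} (h : OpenTrend t) : Pat (t ++ [Lab.B]) := by
  induction h with
  | run k hk => exact .one (.mk k hk)
  | cons hb _ ih => rw [append_assoc]; exact .cons hb ih

theorem OpenTrend.append_A {t : List Lab} (h : OpenTrend t) : OpenTrend (t ++ [Lab.A]) := by
  induction h with
  | run k hk => rw [← replicate_succ']; exact .run (k + 1) (by omega)
  | cons hb _ ih => rw [append_assoc]; exact .cons hb ih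

theorem Pat.openTrend_append_A {t : List Lab} (h : Pat t) : OpenTrend (t ++ [Lab.A]) := by
  induction h with
  | one hb => exact .cons hb (.run 1 le_rfl)
  | cons hb _ ih => rw [append_assoc]; exact .cons hb ih

theorem pat_append_B_iff {t : List Lab} : Pat (t ++ [Lab.B]) ↔ OpenTrend t :=
  ⟨fun h => by simpa using h.openTrend_dropLast, OpenTrend.pat_append_B⟩

theorem openTrend_append_A_iff {t : List Lab} :
    OpenTrend (t ++ [Lab.A]) ↔ t = [] ∨ OpenTrend t ∨ Pat t := by
  refine ⟨fun h => by simpa using h.dropLast_eq_nil_or, ?_⟩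
  rintro (rfl | h | h)
  · exact .run 1 le_rfl
  · exact h.append_A
  · exact h.openTrend_append_A

theorem OpenTrend.not_pat {u : List Lab} (h : OpenTrend u) : ¬Pat u := fun hp => by
  simpa [hp.getLast?] using h.getLast?

theorem not_pat_append_A (t : List Lab) : ¬Pat (t ++ [Lab.A]) := fun h => by
  simpa using h.getLast?

theorem not_openTrend_append_B (t : List Lab) : ¬OpenTrend (t ++ [Lab.B]) := fun h => by
  simpa using h.getLast?

theorem foldl_step_eq (l : List Lab) :
    l.foldl step (0, 0) =
      (l.sublists.countP (fun t => decide (OpenTrend t)),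
        l.sublists.countP (fun t => decide (Pat t))) := by
  induction l using reverseRecOn with
  | nil => simp
  | append_singleton l x ih =>
    rw [foldl_append, ih, countP_sublists_concat, countP_sublists_concat]
    cases x with
    | A =>
      have h_open : l.sublists.countP (fun t => decide (OpenTrend (t ++ [Lab.A]))) =
          l.sublists.countP (fun t => decide (OpenTrend t)) +
            l.sublists.countP (fun t => decide (Pat t)) + 1 := by
        rw [countP_congr (q := fun t => (decide (OpenTrend t) || decide (Pat t)) || decide (t = []))
            (by simp [openTrend_append_A_iff, or_comm]),
          countP_or_of_disjoint (fun t _ ⟨h, h_nil⟩ => by simp_all),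
          countP_or_of_disjoint (fun t _ ⟨ho, hp⟩ => by simp_all [OpenTrend.not_pat]),
          countP_eq_nil_sublists]
      simp [step, h_open, not_pat_append_A]
    | B => simp [step, pat_append_B_iff, not_openTrend_append_B]

/-- For `(SEQ(A+,B))+` under skip-till-any-match, the type-grained recurrences correctly
compute the total number of matched trends (nonempty subsequences parseable as blocks);
in particular, on the stream `a,b,a,a,b,a,b` the final count is `43`. -/
theorem stmt7 :
    (∀ stream : List Lab,
      (stream.foldl step (0, 0)).2 =
        stream.sublists.countP (fun tr => decide (Pat tr))) ∧
    (([Lab.A, Lab.B, Lab.A, Lab.A, Lab.B, Lab.A, Lab.B] : List Lab).foldl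
        step (0, 0)).2 = 43 :=
  ⟨fun stream => by rw [foldl_step_eq], rfl⟩
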